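/- arXiv:1304.5199 — 6 statements merged into one kernel-verified Lean document; each statement's English description precedes it below -/
import Mathlib

section
/- Let S be a finite type, R a binary relation on S, s₀ ∈ S, and F ⊆ S. Then the following are equivalent: (1) there exists an infinite sequence σ : ℕ → S with σ(0) = s₀, R(σ(i), σ(i+1)) for all i, and σ(i) ∈ F for infinitely many i; (2) there exists f ∈ F such that f is reachable from s₀ by a (possibly empty) finite R-path and f is reachable from f by an R-path of length at least 1. -/
/-!
By pigeonhole on the finite state space, a run visiting `F` infinitely often visits some accepting
state `f` at two times `i < j`; the run's prefix up to `i` reaches `f` and its segment from `i` to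
`j` is a cycle through `f`. Conversely, traversing such a cycle periodically gives a run from `f`
visiting `f` infinitely often, and prepending the path from `s₀` gives the run from `s₀`.
-/

open Relation

section

variable {S : Type*} {R : S → S → Prop}

def IsBuchiRun (R : S → S → Prop) (F : Set S) (σ : ℕ → S) : Prop :=
  (∀ i, R (σ i) (σ (i + 1))) ∧ ∀ N, ∃ i ≥ N, σ i ∈ F

section Run

variable {σ : ℕ → S} (hσ : ∀ i, R (σ i) (σ (i + 1)))
include hσ

theorem reflTransGen_of_run {i j : ℕ} (hij : i ≤ j) : ReflTransGen R (σ i) (σ j) :=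
  (reflTransGen_of_succ_of_le (fun i j => R (σ i) (σ j)) (fun k _ => hσ k) hij).lift σ
    fun _ _ h => h

theorem transGen_of_run {i j : ℕ} (hij : i < j) : TransGen R (σ i) (σ j) :=
  (transGen_of_succ_of_lt (fun i j => R (σ i) (σ j)) (fun k _ => hσ k) hij).lift σ
    fun _ _ h => h

end Run

theorem exists_lt_map_eq_mem_of_frequently [Finite S] {F : Set S} {σ : ℕ → S}
    (hF : ∀ N, ∃ i ≥ N, σ i ∈ F) : ∃ i j, i < j ∧ σ i = σ j ∧ σ i ∈ F := by
  have hinf : {i | σ i ∈ F}.Infinite :=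
    Nat.frequently_atTop_iff_infinite.mp (Filter.frequently_atTop.mpr hF)
  obtain ⟨i, hi, j, -, hne, heq⟩ :=
    hinf.exists_ne_map_eq_of_mapsTo (f := σ) (fun _ h => h) F.toFinite
  rcases hne.lt_or_gt with hlt | hgt
  · exact ⟨i, j, hlt, heq, hi⟩
  · exact ⟨j, i, hgt, heq.symm, heq ▸ hi⟩

theorem exists_path_of_transGen {a b : S} (h : TransGen R a b) :
    ∃ (n : ℕ) (p : ℕ → S), p 0 = a ∧ p (n + 1) = b ∧ ∀ i ≤ n, R (p i) (p (i + 1)) := by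
  induction h with
  | @single c hac => exact ⟨0, fun i => if i = 0 then a else c, rfl, rfl, by simpa⟩
  | @tail b c _ hbc ih =>
    obtain ⟨n, p, hp0, hpn, hp⟩ := ih
    refine ⟨n + 1, fun i => if i ≤ n + 1 then p i else c, by simpa, by simp, fun i hi => ?_⟩
    rcases hi.lt_or_eq with hi | rfl
    · simpa [hi.le, Nat.le_of_lt_succ hi] using hp i (Nat.le_of_lt_succ hi)
    · simpa [hpn] using hbc

theorem exists_buchiRun_of_transGen_self {F : Set S} {a : S} (ha : a ∈ F)
    (h : TransGen R a a) : ∃ σ, σ 0 = a ∧ IsBuchiRun R F σ := by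
  obtain ⟨n, p, hp0, hpn, hp⟩ := exists_path_of_transGen h
  refine ⟨fun i => p (i % (n + 1)), by simpa, fun i => ?_, fun N => ?_⟩
  · have hwrap : ∀ k ≤ n, p ((k + 1) % (n + 1)) = p (k + 1) := by
      intro k hk
      rcases hk.lt_or_eq with hk | rfl
      · rw [Nat.mod_eq_of_lt (by omega)]
      · rw [Nat.mod_self, hp0, hpn]
    have hi : i % (n + 1) ≤ n := Nat.le_of_lt_succ (Nat.mod_lt i n.succ_pos)
    show R (p (i % (n + 1))) (p ((i + 1) % (n + 1)))
    rw [← Nat.mod_add_mod, hwrap _ hi]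
    exact hp _ hi
  · exact ⟨N * (n + 1), Nat.le_mul_of_pos_right N n.succ_pos, by simpa [hp0]⟩

theorem IsBuchiRun.cons {F : Set S} {σ : ℕ → S} (hσ : IsBuchiRun R F σ) {a : S}
    (ha : R a (σ 0)) : IsBuchiRun R F (fun i => if i = 0 then a else σ (i - 1)) := by
  refine ⟨fun i => ?_, fun N => ?_⟩
  · cases i
    · simpa
    · simpa using hσ.1 _
  · obtain ⟨i, hiN, hi⟩ := hσ.2 N
    exact ⟨i + 1, by omega, by simpa⟩

theorem exists_buchiRun_of_reflTransGen {F : Set S} {a b : S} (h : ReflTransGen R a b)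
    (hb : ∃ σ, σ 0 = b ∧ IsBuchiRun R F σ) : ∃ σ, σ 0 = a ∧ IsBuchiRun R F σ := by
  induction h using ReflTransGen.head_induction_on with
  | refl => exact hb
  | head hac _ ih =>
    obtain ⟨σ, hσ0, hσ⟩ := ih
    exact ⟨_, rfl, hσ.cons (hσ0 ▸ hac)⟩

end

/-- Lasso characterization of Büchi nonemptiness: over a finite state space `S`,
there is an infinite run from `s₀` along the relation `R` visiting the set `F` of
accepting states infinitely often if and only if some accepting state `f ∈ F` is
reachable from `s₀` (by a possibly empty finite `R`-path) and lies on an `R`-cycle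
(a path from `f` to `f` of length at least `1`). -/
theorem buchi_nonempty_iff_lasso {S : Type*} [Fintype S]
    (R : S → S → Prop) (s₀ : S) (F : Set S) :
    (∃ σ : ℕ → S, σ 0 = s₀ ∧ (∀ i, R (σ i) (σ (i + 1))) ∧ ∀ N, ∃ i ≥ N, σ i ∈ F) ↔
    (∃ f ∈ F, Relation.ReflTransGen R s₀ f ∧ Relation.TransGen R f f) := by
  constructor
  · rintro ⟨σ, rfl, hσ, hF⟩
    obtain ⟨i, j, hij, heq, hi⟩ := exists_lt_map_eq_mem_of_frequently hF
    have hcycle := transGen_of_run hσ hij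
    rw [← heq] at hcycle
    exact ⟨σ i, hi, reflTransGen_of_run hσ i.zero_le, hcycle⟩
  · rintro ⟨f, hf, hreach, hcycle⟩
    exact exists_buchiRun_of_reflTransGen hreach (exists_buchiRun_of_transGen_self hf hcycle)
end

section
/- Let (Ω, Pr) be a probability space, let ε, δ be reals with 0 < ε < 1 and 0 < δ < 1, and let X₁, …, X_N be independent identically distributed random variables taking values in [0,1] with common mean μ > 0 and variance σ². Set ρ = max(σ², ε·μ). If N ≥ 4(e−2)·ln(2/δ)·ρ/(ε·μ)², then Pr[ μ(1−ε) ≤ (X₁ + ⋯ + X_N)/N ≤ μ(1+ε) ] ≥ 1 − δ. -/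
/-!
For `|z| ≤ 1` the exponential series gives `exp z ≤ 1 + z + (e - 2) z²`, so a centred variable
`Y` with `|Y| ≤ 1` and variance at most `ρ` has `𝔼[exp (t Y)] ≤ exp ((e - 2) t² ρ)` for `|t| ≤ 1`.
Multiplying over independent summands and applying Markov's inequality at
`t = εμ / (2 (e - 2) ρ)`, which is at most `1` because `εμ ≤ ρ` and `2 (e - 2) ≥ 1`, bounds each
tail of `∑ (Xᵢ - μ)` beyond `N ε μ` by `exp (-N (εμ)² / (4 (e - 2) ρ)) ≤ δ / 2`.
-/

open MeasureTheory ProbabilityTheory Real Finset Nat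

lemma exp_le_one_add_add_mul_sq {z : ℝ} (hz : |z| ≤ 1) :
    exp z ≤ 1 + z + (exp 1 - 2) * z ^ 2 := by
  have tail (x : ℝ) : HasSum (fun n ↦ x ^ (n + 2) / (n + 2)!) (exp x - 1 - x) := by
    have h := (hasSum_nat_add_iff' 2).2
      (exp_eq_exp_ℝ ▸ NormedSpace.expSeries_div_hasSum_exp x)
    simpa [sum_range_succ, sub_sub] using h
  have hpow (n : ℕ) : z ^ (n + 2) ≤ z ^ 2 :=
    calc z ^ (n + 2) ≤ |z| ^ (n + 2) := abs_pow z _ ▸ le_abs_self _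
      _ ≤ |z| ^ 2 := pow_le_pow_of_le_one (abs_nonneg z) hz (by omega)
      _ = z ^ 2 := sq_abs z
  have hle (n : ℕ) : z ^ (n + 2) / (n + 2)! ≤ 1 ^ (n + 2) / (n + 2)! * z ^ 2 := by
    rw [one_pow, one_div_mul_eq_div]
    exact div_le_div_of_nonneg_right (hpow n) (by positivity)
  linarith [hasSum_le hle (tail z) ((tail 1).mul_right (z ^ 2))]

lemma one_le_two_mul_exp_one_sub_two : 1 ≤ 2 * (exp 1 - 2) := by
  linarith [exp_one_gt_d9]

lemma two_mul_exp_neg_le {δ x : ℝ} (hδ : 0 < δ) (hx : log (2 / δ) ≤ x) :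
    2 * exp (-x) ≤ δ :=
  calc 2 * exp (-x) ≤ 2 * exp (-log (2 / δ)) := by gcongr
    _ = δ := by rw [exp_neg, exp_log (by positivity)]; field_simp

lemma div_mem_Icc_of_abs_sub_lt {S n μ ε : ℝ} (hn : 0 < n) (h : |S - n * μ| < n * (ε * μ)) :
    μ * (1 - ε) ≤ S / n ∧ S / n ≤ μ * (1 + ε) := by
  rw [le_div_iff₀ hn, div_le_iff₀ hn]
  constructor <;> linarith [abs_lt.1 h]

section

variable {Ω : Type*} [MeasurableSpace Ω] {P : Measure Ω}

lemma integrable_of_abs_le [IsFiniteMeasure P] {Y : Ω → ℝ} (hY : AEMeasurable Y P) {C : ℝ}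
    (hC : ∀ ω, |Y ω| ≤ C) :
    Integrable Y P :=
  .of_bound hY.aestronglyMeasurable C (.of_forall hC)

lemma integrable_exp_mul_of_abs_le [IsFiniteMeasure P] {Y : Ω → ℝ} (hY : AEMeasurable Y P) {C : ℝ}
    (hC : ∀ ω, |Y ω| ≤ C) (t : ℝ) : Integrable (fun ω ↦ exp (t * Y ω)) P :=
  integrable_of_abs_le (C := exp (|t| * C)) (hY.const_mul t).exp fun ω ↦ by
    rw [abs_exp, exp_le_exp]
    exact (le_abs_self _).trans (abs_mul t _ ▸ mul_le_mul_of_nonneg_left (hC ω) (abs_nonneg t))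

variable [IsProbabilityMeasure P]

lemma mgf_le_exp_mul_variance {Y : Ω → ℝ} (hY : AEMeasurable Y P) (hbdd : ∀ ω, |Y ω| ≤ 1)
    (hmean : P[Y] = 0) {t : ℝ} (ht : |t| ≤ 1) :
    mgf Y P t ≤ exp ((exp 1 - 2) * t ^ 2 * variance Y P) := by
  set c := exp 1 - 2
  have htY (ω : Ω) : |t * Y ω| ≤ 1 := by
    rw [abs_mul]; exact mul_le_one₀ ht (abs_nonneg _) (hbdd ω)
  have hYint : Integrable Y P := integrable_of_abs_le hY hbdd
  have hY2int : Integrable (fun ω ↦ Y ω ^ 2) P :=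
    integrable_of_abs_le (hY.pow_const 2) fun ω ↦ by
      rw [abs_pow]; exact pow_le_one₀ (abs_nonneg _) (hbdd ω)
  have hexpint : Integrable (fun ω ↦ exp (t * Y ω)) P := integrable_exp_mul_of_abs_le hY hbdd t
  have hlin : Integrable (fun ω ↦ 1 + t * Y ω) P := (integrable_const 1).add (hYint.const_mul t)
  have hvar : variance Y P = ∫ ω, Y ω ^ 2 ∂P := by
    simp [variance_eq_integral hY, hmean]
  calc mgf Y P t = ∫ ω, exp (t * Y ω) ∂P := rfl
    _ ≤ ∫ ω, (1 + t * Y ω + c * t ^ 2 * Y ω ^ 2) ∂P :=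
      integral_mono hexpint (hlin.add (hY2int.const_mul _)) fun ω ↦ by
        linarith [exp_le_one_add_add_mul_sq (htY ω)]
    _ = 1 + c * t ^ 2 * variance Y P := by
      rw [integral_add hlin (hY2int.const_mul _), integral_add (integrable_const 1)
        (hYint.const_mul t), integral_const_mul, integral_const_mul, hmean, hvar]
      simp
    _ ≤ exp (c * t ^ 2 * variance Y P) := by linarith [add_one_le_exp (c * t ^ 2 * variance Y P)]

lemma one_sub_measureReal_le_of_union_eq_univ {s t : Set Ω} (h : s ∪ t = Set.univ) :
    1 - P.real t ≤ P.real s := by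
  have := measureReal_union_le (μ := P) s t
  rw [h, probReal_univ] at this
  linarith

variable {ι : Type*} [Fintype ι] {Y : ι → Ω → ℝ}

lemma mgf_sum_le_exp (hmeas : ∀ i, Measurable (Y i)) (hindep : iIndepFun Y P)
    (hbdd : ∀ i ω, |Y i ω| ≤ 1) (hmean : ∀ i, P[Y i] = 0) {ρ : ℝ}
    (hvar : ∀ i, variance (Y i) P ≤ ρ) {t : ℝ} (ht : |t| ≤ 1) :
    mgf (∑ i, Y i) P t ≤ exp (Fintype.card ι * ((exp 1 - 2) * t ^ 2 * ρ)) := by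
  have hc : 0 ≤ exp 1 - 2 := by linarith [one_le_two_mul_exp_one_sub_two]
  calc mgf (∑ i, Y i) P t = ∏ i, mgf (Y i) P t := hindep.mgf_sum hmeas _
    _ ≤ ∏ _i : ι, exp ((exp 1 - 2) * t ^ 2 * ρ) := prod_le_prod (fun i _ ↦ mgf_nonneg) fun i _ ↦
        (mgf_le_exp_mul_variance (hmeas i).aemeasurable (hbdd i) (hmean i) ht).trans
          (by gcongr; exact hvar i)
    _ = _ := by rw [prod_const, Finset.card_univ, ← exp_nat_mul]

/-- A Bernstein-type bound: the Chernoff bound at `t = s / (2 (e - 2) ρ)`. -/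
lemma measureReal_sum_ge_le_exp (hmeas : ∀ i, Measurable (Y i)) (hindep : iIndepFun Y P)
    (hbdd : ∀ i ω, |Y i ω| ≤ 1) (hmean : ∀ i, P[Y i] = 0) {ρ s : ℝ}
    (hvar : ∀ i, variance (Y i) P ≤ ρ) (hs : 0 < s) (hsρ : s ≤ ρ) :
    P.real {ω | Fintype.card ι * s ≤ ∑ i, Y i ω}
      ≤ exp (-(Fintype.card ι * s ^ 2 / (4 * (exp 1 - 2) * ρ))) := by
  set c := exp 1 - 2
  set n : ℝ := (Fintype.card ι : ℝ)
  have hc : 1 ≤ 2 * c := one_le_two_mul_exp_one_sub_two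
  have hρ : 0 < ρ := hs.trans_le hsρ
  set t := s / (2 * c * ρ) with ht
  have ht0 : 0 ≤ t := by positivity
  have ht1 : |t| ≤ 1 := by
    rw [abs_of_nonneg ht0, div_le_one (by positivity)]
    nlinarith
  have hint : Integrable (fun ω ↦ exp (t * (∑ i, Y i) ω)) P :=
    hindep.integrable_exp_mul_sum hmeas fun i _ ↦
      integrable_exp_mul_of_abs_le (hmeas i).aemeasurable (hbdd i) t
  calc P.real {ω | n * s ≤ ∑ i, Y i ω} = P.real {ω | n * s ≤ (∑ i, Y i) ω} := by
        simp only [Finset.sum_apply]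
    _ ≤ exp (-t * (n * s)) * mgf (∑ i, Y i) P t := measure_ge_le_exp_mul_mgf _ ht0 hint
    _ ≤ exp (-t * (n * s)) * exp (n * (c * t ^ 2 * ρ)) := by
        gcongr; exact mgf_sum_le_exp hmeas hindep hbdd hmean hvar ht1
    _ = exp (-(n * s ^ 2 / (4 * c * ρ))) := by
        have hc0 : 0 < c := by linarith
        rw [← exp_add, ht]; congr 1; field_simp; ring

lemma measureReal_abs_sum_ge_le_two_mul_exp (hmeas : ∀ i, Measurable (Y i))
    (hindep : iIndepFun Y P) (hbdd : ∀ i ω, |Y i ω| ≤ 1) (hmean : ∀ i, P[Y i] = 0) {ρ s : ℝ}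
    (hvar : ∀ i, variance (Y i) P ≤ ρ) (hs : 0 < s) (hsρ : s ≤ ρ) :
    P.real {ω | Fintype.card ι * s ≤ |∑ i, Y i ω|}
      ≤ 2 * exp (-(Fintype.card ι * s ^ 2 / (4 * (exp 1 - 2) * ρ))) := by
  have hupper := measureReal_sum_ge_le_exp hmeas hindep hbdd hmean hvar hs hsρ
  have hlower := measureReal_sum_ge_le_exp (Y := fun i ↦ -Y i) (fun i ↦ (hmeas i).neg)
    (hindep.comp (fun _ ↦ Neg.neg) fun _ ↦ measurable_neg)
    (fun i ω ↦ (abs_neg _).trans_le (hbdd i ω)) (fun i ↦ by simp [integral_neg, hmean i])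
    (fun i ↦ by simp [variance_neg, hvar i]) hs hsρ
  have hsplit : {ω | Fintype.card ι * s ≤ |∑ i, Y i ω|}
      ⊆ {ω | Fintype.card ι * s ≤ ∑ i, Y i ω} ∪ {ω | Fintype.card ι * s ≤ ∑ i, (-Y i) ω} := by
    intro ω hω
    simp only [Set.mem_ofPred_eq, Set.mem_union, Pi.neg_apply, sum_neg_distrib] at hω ⊢
    exact le_abs.1 hω
  calc _ ≤ _ := measureReal_mono hsplit
    _ ≤ _ := measureReal_union_le _ _
    _ ≤ _ := by linarith

end

theorem zero_one_estimator_general {Ω : Type*} [MeasurableSpace Ω] (P : Measure Ω)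
    [IsProbabilityMeasure P] (ε δ : ℝ) (hε0 : 0 < ε)
    (hδ0 : 0 < δ) (N : ℕ) (hN : 0 < N)
    (X : Fin N → Ω → ℝ) (hmeas : ∀ i, Measurable (X i))
    (hindep : iIndepFun X P)
    (hident : ∀ i, IdentDistrib (X i) (X ⟨0, hN⟩) P P)
    (hrange : ∀ i ω, X i ω ∈ Set.Icc (0 : ℝ) 1)
    (μ : ℝ) (hμ : μ = ∫ ω, X ⟨0, hN⟩ ω ∂P) (hμpos : 0 < μ)
    (σ2 : ℝ) (hσ2 : σ2 = variance (X ⟨0, hN⟩) P)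
    (ρ : ℝ) (hρ : ρ = max σ2 (ε * μ))
    (hNbound : (N : ℝ) ≥ 4 * (Real.exp 1 - 2) * Real.log (2 / δ) * ρ / (ε * μ) ^ 2) :
    (P {ω | μ * (1 - ε) ≤ (∑ i, X i ω) / N ∧ (∑ i, X i ω) / N ≤ μ * (1 + ε)}).toReal
      ≥ 1 - δ := by
  have hXint (i) : Integrable (X i) P := integrable_of_abs_le (hmeas i).aemeasurable fun ω ↦
    abs_le.2 ⟨by linarith [(hrange i ω).1], (hrange i ω).2⟩
  have hmean (i) : P[X i] = μ := hμ ▸ (hident i).integral_eq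
  have hμ1 : μ ≤ 1 := hmean ⟨0, hN⟩ ▸ (integral_mono (hXint _) (integrable_const 1)
    fun ω ↦ (hrange _ ω).2).trans_eq (by simp)
  have hεμ : 0 < ε * μ := mul_pos hε0 hμpos
  have hεμρ : ε * μ ≤ ρ := hρ ▸ le_max_right _ _
  have hdev := measureReal_abs_sum_ge_le_two_mul_exp (P := P) (Y := fun i ω ↦ X i ω - μ)
    (fun i ↦ (hmeas i).sub_const μ)
    (hindep.comp (fun _ x ↦ x - μ) fun _ ↦ measurable_id.sub_const μ)
    (fun i ω ↦ abs_le.2 ⟨by linarith [(hrange i ω).1], by linarith [(hrange i ω).2]⟩)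
    (fun i ↦ by simp [integral_sub (hXint i) (integrable_const μ), hmean i])
    (fun i ↦ by
      rw [variance_sub_const (hmeas i).aestronglyMeasurable, (hident i).variance_eq, ← hσ2, hρ]
      exact le_max_left _ _)
    hεμ hεμρ
  rw [Fintype.card_fin] at hdev
  have hlog : log (2 / δ) ≤ N * (ε * μ) ^ 2 / (4 * (exp 1 - 2) * ρ) := by
    have hc : 0 < exp 1 - 2 := by linarith [one_le_two_mul_exp_one_sub_two]
    rw [ge_iff_le, div_le_iff₀ (by positivity)] at hNbound
    rw [le_div_iff₀ (by nlinarith)]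
    linarith
  have hcover : {ω | μ * (1 - ε) ≤ (∑ i, X i ω) / N ∧ (∑ i, X i ω) / N ≤ μ * (1 + ε)}
      ∪ {ω | (N : ℝ) * (ε * μ) ≤ |∑ i, (X i ω - μ)|} = Set.univ := by
    refine Set.eq_univ_of_forall fun ω ↦
      (lt_or_ge |∑ i, (X i ω - μ)| (N * (ε * μ))).imp (fun h ↦ ?_) id
    rw [sum_sub_distrib, sum_const, Finset.card_fin, nsmul_eq_mul] at h
    exact div_mem_Icc_of_abs_sub_lt (Nat.cast_pos.2 hN) h
  change P.real _ ≥ 1 - δ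
  linarith [one_sub_measureReal_le_of_union_eq_univ (P := P) hcover, two_mul_exp_neg_le hδ0 hlog]

/-- Generalized zero-one estimator theorem (Dagum–Karp–Luby–Ross): if `X₁, …, X_N`
are i.i.d. random variables with values in `[0,1]`, common mean `μ > 0` and variance
`σ²`, and `ρ = max(σ², ε·μ)`, then `N ≥ 4(e−2)·ln(2/δ)·ρ/(ε·μ)²` samples suffice for
the empirical mean to be an `(ε,δ)`-approximation of `μ`, i.e. it lies in
`[μ(1−ε), μ(1+ε)]` with probability at least `1−δ`. -/
theorem zero_one_estimator {Ω : Type*} [MeasurableSpace Ω] (P : Measure Ω)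
    [IsProbabilityMeasure P] (ε δ : ℝ) (hε0 : 0 < ε) (hε1 : ε < 1)
    (hδ0 : 0 < δ) (hδ1 : δ < 1) (N : ℕ) (hN : 0 < N)
    (X : Fin N → Ω → ℝ) (hmeas : ∀ i, Measurable (X i))
    (hindep : iIndepFun X P)
    (hident : ∀ i, IdentDistrib (X i) (X ⟨0, hN⟩) P P)
    (hrange : ∀ i ω, X i ω ∈ Set.Icc (0 : ℝ) 1)
    (μ : ℝ) (hμ : μ = ∫ ω, X ⟨0, hN⟩ ω ∂P) (hμpos : 0 < μ)
    (σ2 : ℝ) (hσ2 : σ2 = variance (X ⟨0, hN⟩) P)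
    (ρ : ℝ) (hρ : ρ = max σ2 (ε * μ))
    (hNbound : (N : ℝ) ≥ 4 * (Real.exp 1 - 2) * Real.log (2 / δ) * ρ / (ε * μ) ^ 2) :
    (P {ω | μ * (1 - ε) ≤ (∑ i, X i ω) / N ∧ (∑ i, X i ω) / N ≤ μ * (1 + ε)}).toReal
      ≥ 1 - δ :=
  zero_one_estimator_general P ε δ hε0 hδ0 N hN X hmeas hindep hident hrange μ hμ hμpos σ2 hσ2 ρ hρ
    hNbound
end

section
/- Let V be a type, let A, B ⊆ V, and let f, g : (V → Bool) → Bool be Boolean functions such that f depends only on the variables in A, g depends only on the variables in B, and for every valuation v : V → Bool, f(v) = true implies g(v) = true. Then there exists a Boolean function h : (V → Bool) → Bool that depends only on the variables in A ∩ B and satisfies, for every valuation v: f(v) = true implies h(v) = true, and h(v) = true implies g(v) = true. -/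
/-- A Boolean function `f` on valuations `V → Bool` depends only on the variables in
`S` if its value is unchanged when the valuation is modified outside of `S`. -/
def DependsOnlyOn {V : Type*} (f : (V → Bool) → Bool) (S : Set V) : Prop :=
  ∀ v w : V → Bool, (∀ x ∈ S, v x = w x) → f v = f w

open Classical in
/-- Craig interpolation for propositional logic, stated semantically: if `f` depends
only on the variables in `A`, `g` depends only on the variables in `B`, and `f → g`
is valid, then there is an interpolant `h` depending only on the variables in `A ∩ B`
with `f → h` and `h → g` valid. -/
theorem craig_interpolation {V : Type*} (A B : Set V)
    (f g : (V → Bool) → Bool)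
    (hf : DependsOnlyOn f A) (hg : DependsOnlyOn g B)
    (himp : ∀ v, f v = true → g v = true) :
    ∃ h : (V → Bool) → Bool, DependsOnlyOn h (A ∩ B) ∧
      (∀ v, f v = true → h v = true) ∧ (∀ v, h v = true → g v = true) := by
  refine ⟨fun v => decide (∃ w, f w = true ∧ ∀ x ∈ A ∩ B, w x = v x), ?_, ?_, ?_⟩
  · intro v w hvw
    simp only [decide_eq_decide]
    constructor
    · rintro ⟨u, hu, hag⟩
      exact ⟨u, hu, fun x hx => (hag x hx).trans (hvw x hx)⟩
    · rintro ⟨u, hu, hag⟩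
      exact ⟨u, hu, fun x hx => (hag x hx).trans (hvw x hx).symm⟩
  · intro v hv
    simp only [decide_eq_true_eq]
    exact ⟨v, hv, fun x _ => rfl⟩
  · intro v hv
    simp only [decide_eq_true_eq] at hv
    obtain ⟨w, hw, hag⟩ := hv
    set u : V → Bool := fun x => if x ∈ A then w x else v x with hu
    have hfu : f u = true := by
      rw [hf u w (fun x hx => by simp [hu, hx])]; exact hw
    have := himp u hfu
    rw [hg v u (fun x hx => ?_)]
    · exact this
    · by_cases hxA : x ∈ A
      · simp [hu, hxA, (hag x ⟨hxA, hx⟩).symm]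
      · simp [hu, hxA]
end

section
/- There exists an absolute constant C > 0 such that for every integer c ≥ 2, every real ε with 0 < ε < 1, and with k = ⌈C·(c·ln c)/ε²⌉, the following holds for every simple graph G on a finite vertex set V with |V| = n ≥ k: (1) if G is c-colorable, then for every subset π ⊆ V of size k the induced subgraph G[π] is c-colorable; (2) if every simple graph G' on V whose edge set differs from that of G in at most ε·n² edges fails to be c-colorable, then for a subset π ⊆ V of size k chosen uniformly at random, the induced subgraph G[π] is not c-colorable with probability at least 2/3. -/
/-!
Replay an ordered random sample against `G` online. Every vertex keeps a palette of colours
still available to it (initially all `c`); a vertex is *restricting* when each colour of its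
palette is available to at least `h ≈ εn/4` of its neighbours. Sampled restricting vertices are
fixed to a colour, which is then removed from the palettes of their neighbours, so the total
palette size (at most `cn`) drops by at least `h` each time and at most `r ≈ 4c/ε` vertices are
ever fixed. Given the sample, the run is determined by the colours of the fixed vertices, and a
proper colouring of the sample supplies colours for which the run never gets stuck.

If `G` is `ε`-far from `c`-colourable, every palette system has at least `3εn/4` restricting
vertices: otherwise give every other vertex a palette colour available to fewer than `h` of its
neighbours, and this colouring has fewer than `εn²` monochromatic edges. Hence at every step at
least an `ε/2` fraction of the unsampled vertices is restricting, and as each such step fixes a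
vertex, only a `2^r (1 - ε/4)^k` fraction of the samples keeps the run alive for a given colour
sequence. A union bound over the `c^r` colour sequences, with `r log (2c) ≪ εk/4`, finishes the
proof.
-/

open scoped Classical

open Finset

noncomputable section

namespace AlonKrivelevich

variable {V : Type*} {c : ℕ}

lemma sum_le_of_two_mul_le {ι : Type*} {A R : Finset ι} {x : ι → ℝ} {B : ℝ}
    (hx : ∀ i ∈ A, (if i ∈ R then 2 else 1) * x i ≤ B) :
    ∑ i ∈ A, x i ≤ B * (#A - #(A ∩ R) / 2) := by
  have hin : ∑ i ∈ A ∩ R, x i ≤ #(A ∩ R) • (B / 2) :=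
    sum_le_card_nsmul _ _ _ fun i hi => by
      have := hx i (mem_inter.1 hi).1
      rw [if_pos (mem_inter.1 hi).2] at this
      linarith
  have hout : ∑ i ∈ A with i ∉ R, x i ≤ #{i ∈ A | i ∉ R} • B :=
    sum_le_card_nsmul _ _ _ fun i hi => by
      simpa [(mem_filter.1 hi).2] using hx i (mem_filter.1 hi).1
  have hcard := card_filter_add_card_filter_not (s := A) (· ∈ R)
  rw [filter_mem_eq_inter] at hcard
  have : (#{i ∈ A | i ∉ R} : ℝ) = #A - #(A ∩ R) := by
    rw [← hcard]; push_cast; ring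
  rw [nsmul_eq_mul] at hin hout
  rw [this] at hout
  rw [← sum_filter_add_sum_filter_not A (· ∈ R), filter_mem_eq_inter]
  linarith

lemma card_filter_powersetCard_mul_factorial_le {α : Type*} [Fintype α] {k : ℕ}
    {P : Finset α → Prop} {T : Finset (Fin k → α)}
    (hT : ∀ π : Finset α, #π = k → P π →
      ∀ f : Fin k → α, Function.Injective f → (∀ i, f i ∈ π) → f ∈ T) :
    #{π ∈ powersetCard k univ | P π} * k.factorial ≤ #T := by
  have hfiber : ∀ π ∈ ({π ∈ powersetCard k univ | P π} : Finset _),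
      k.factorial ≤ #{f ∈ T | univ.image f = π} := by
    intro π hπ
    obtain ⟨hπk, hP⟩ := mem_filter.1 hπ
    have hcard : #π = k := (mem_powersetCard.1 hπk).2
    set e : Fin k ≃ π := (π.equivFinOfCardEq hcard).symm
    have hinj (τ : Equiv.Perm (Fin k)) : Function.Injective fun i => (e (τ i) : α) :=
      Subtype.val_injective.comp (e.injective.comp τ.injective)
    calc k.factorial = #(univ : Finset (Equiv.Perm (Fin k))) := by
          rw [card_univ, Fintype.card_perm, Fintype.card_fin]
      _ ≤ _ := by
        refine card_le_card_of_injOn (fun τ i => (e (τ i) : α)) (fun τ _ => ?_) ?_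
        · refine mem_filter.2 ⟨hT π hcard hP _ (hinj τ) fun i => (e (τ i)).2, ?_⟩
          ext x
          refine ⟨fun hx => ?_, fun hx => ?_⟩
          · obtain ⟨i, -, rfl⟩ := mem_image.1 hx
            exact (e (τ i)).2
          · exact mem_image.2 ⟨τ.symm (e.symm ⟨x, hx⟩), mem_univ _, by simp⟩
        · intro τ₁ _ τ₂ _ heq
          exact Equiv.ext fun i => e.injective (Subtype.ext (congrFun heq i))
  calc #{π ∈ powersetCard k univ | P π} * k.factorial
      = ∑ π ∈ ({π ∈ powersetCard k univ | P π} : Finset _), k.factorial := by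
        rw [sum_const, smul_eq_mul]
    _ ≤ ∑ π ∈ ({π ∈ powersetCard k univ | P π} : Finset _), #{f ∈ T | univ.image f = π} :=
        sum_le_sum hfiber
    _ ≤ #T := by rw [sum_card_fiberwise_eq_card_filter]; exact card_filter_le _ _

section Monochromatic

variable {α : Type*} (G : SimpleGraph V) (χ : V → α)

def monochromatic : SimpleGraph V where
  Adj u v := G.Adj u v ∧ χ u = χ v
  symm := ⟨fun _ _ huv => ⟨huv.1.symm, huv.2.symm⟩⟩
  loopless := ⟨fun _ hv => G.irrefl hv.1⟩

variable {G χ}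

lemma monochromatic_adj {u v : V} : (monochromatic G χ).Adj u v ↔ G.Adj u v ∧ χ u = χ v :=
  Iff.rfl

lemma monochromatic_le : monochromatic G χ ≤ G := fun _ _ huv => (monochromatic_adj.1 huv).1

lemma colorable_sdiff_monochromatic (χ : V → Fin c) : (G \ monochromatic G χ).Colorable c :=
  ⟨SimpleGraph.Coloring.mk χ fun huv heq => huv.2 (monochromatic_adj.2 ⟨huv.1, heq⟩)⟩

lemma lt_card_monochromatic_of_far [Fintype V] {m : ℝ}
    (hfar : ∀ G' : SimpleGraph V, ((symmDiff G.edgeSet G'.edgeSet).ncard : ℝ) ≤ m →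
      ¬ G'.Colorable c) (χ : V → Fin c) :
    m < #(monochromatic G χ).edgeFinset := by
  by_contra! hle
  refine hfar (G \ monochromatic G χ) ?_ (colorable_sdiff_monochromatic χ)
  rwa [SimpleGraph.edgeSet_sdiff, symmDiff_comm, symmDiff_of_le sdiff_le, sdiff_sdiff_right_self,
    inf_of_le_right (SimpleGraph.edgeSet_mono monochromatic_le),
    ← SimpleGraph.coe_edgeFinset, Set.ncard_coe_finset]

end Monochromatic

section Palette

variable (G : SimpleGraph V) (σ : V → Finset (Fin c))

def colorDegree [Fintype V] (u : V) (j : Fin c) : ℕ := #{w | G.Adj u w ∧ j ∈ σ w}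

def restricting [Fintype V] (h : ℕ) : Finset V := {v | ∀ j ∈ σ v, h ≤ colorDegree G σ v j}

def potential [Fintype V] : ℕ := ∑ v, #(σ v)

def assign (u : V) (j : Fin c) : V → Finset (Fin c) :=
  fun w => if w = u then {j} else if G.Adj u w then (σ w).erase j else σ w

variable {G σ}

lemma card_assign_add_le {u : V} {j : Fin c} (hj : j ∈ σ u) (w : V) :
    #(assign G σ u j w) + (if G.Adj u w ∧ j ∈ σ w then 1 else 0) ≤ #(σ w) := by
  by_cases hwu : w = u
  · subst hwu
    simpa [assign] using card_pos.2 ⟨j, hj⟩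
  by_cases hadj : G.Adj u w
  · by_cases hjw : j ∈ σ w
    · simpa [assign, hwu, hadj, hjw] using card_pos.2 ⟨j, hjw⟩
    · simp [assign, hwu, hadj, hjw]
  · simp [assign, hwu, hadj]

lemma potential_assign_add_le [Fintype V] {h : ℕ} {u : V} {j : Fin c}
    (hu : u ∈ restricting G σ h) (hj : j ∈ σ u) :
    potential (assign G σ u j) + h ≤ potential σ := by
  have hdeg : h ≤ colorDegree G σ u j := (mem_filter.1 hu).2 j hj
  rw [colorDegree, card_filter] at hdeg
  calc potential (assign G σ u j) + h
      ≤ ∑ w, (#(assign G σ u j w) + if G.Adj u w ∧ j ∈ σ w then 1 else 0) := by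
        rw [sum_add_distrib, potential]; omega
    _ ≤ potential σ := sum_le_sum fun w _ => card_assign_add_le hj w

end Palette

/-- `fixed` lists the vertices that have been fixed to a colour, in the order of fixing. -/
structure State (V : Type*) (c : ℕ) where
  avail : V → Finset (Fin c)
  sampled : Finset V
  fixed : List V

namespace State

variable (G : SimpleGraph V) (h : ℕ) (s : State V c)

def init [Fintype V] : State V c := ⟨fun _ => univ, ∅, []⟩

def pending : Finset V := {v ∈ s.sampled | v ∉ s.fixed}

def fix (u : V) (j : Fin c) : State V c := ⟨assign G s.avail u j, s.sampled, s.fixed ++ [u]⟩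

def addSample (v : V) : State V c := { s with sampled := insert v s.sampled }

def Honest (φ : V → Fin c) (S : Finset V) : Prop :=
  s.sampled ⊆ S ∧ ∀ v ∈ S, φ v ∈ s.avail v

variable {G s}

lemma card_pending_fix_lt {u : V} (hu : u ∈ s.pending) (j : Fin c) :
    #(s.fix G u j).pending < #s.pending := by
  refine card_lt_card ⟨fun v hv => ?_, fun hsub => ?_⟩
  · simp only [pending, fix, mem_filter, List.mem_append, not_or] at hv ⊢
    exact ⟨hv.1, hv.2.1⟩
  · simpa [pending, fix] using hsub hu

variable {φ : V → Fin c} {S : Finset V}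

lemma Honest.fix (hφ : ∀ u ∈ S, ∀ w ∈ S, G.Adj u w → φ u ≠ φ w) (hs : s.Honest φ S) {u : V}
    (hu : u ∈ s.sampled) : (s.fix G u (φ u)).Honest φ S := by
  refine ⟨hs.1, fun w hw => ?_⟩
  simp only [State.fix, assign]
  split_ifs with hwu hadj
  · rw [hwu, mem_singleton]
  · exact mem_erase.2 ⟨(hφ u (hs.1 hu) w hw hadj).symm, hs.2 w hw⟩
  · exact hs.2 w hw

lemma Honest.addSample (hs : s.Honest φ S) {v : V} (hv : v ∈ S) : (s.addSample v).Honest φ S :=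
  ⟨insert_subset hv hs.1, hs.2⟩

variable (G s) [Fintype V]

def Settled : Prop := s.pending ∩ restricting G s.avail h = ∅

def Valid : Prop :=
  (∀ u ∈ s.fixed, u ∈ s.sampled) ∧ potential s.avail + h * s.fixed.length ≤ c * Fintype.card V

variable {G h s}

lemma honest_init : (init : State V c).Honest φ S :=
  ⟨empty_subset _, fun _ _ => mem_univ _⟩

lemma settled_init : (init : State V c).Settled G h := by
  simp [Settled, pending, init]

lemma valid_init : (init : State V c).Valid h := by
  simp [Valid, potential, init, mul_comm]

lemma Valid.fix {u : V} {j : Fin c} (hs : s.Valid h) (hu : u ∈ s.pending)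
    (hR : u ∈ restricting G s.avail h) (hj : j ∈ s.avail u) : (s.fix G u j).Valid h := by
  have := potential_assign_add_le hR hj
  refine ⟨fun w hw => ?_, ?_⟩
  · rcases List.mem_append.1 hw with hw | hw
    · exact hs.1 w hw
    · rw [List.mem_singleton.1 hw]; exact (mem_filter.1 hu).1
  · simp only [State.fix, List.length_append, List.length_singleton]
    linarith [hs.2]

lemma Valid.addSample (hs : s.Valid h) (v : V) : (s.addSample v).Valid h :=
  ⟨fun u hu => mem_insert_of_mem (hs.1 u hu), hs.2⟩

lemma Valid.length_le {r : ℕ} (hs : s.Valid h) (hh : 0 < h) (hr : c * Fintype.card V ≤ h * r) :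
    s.fixed.length ≤ r :=
  le_of_mul_le_mul_left (hs.2.trans' (Nat.le_add_left _ _) |>.trans hr) hh

lemma Settled.card_inter_restricting_le (hs : s.Settled G h) :
    #(s.sampled ∩ restricting G s.avail h) ≤ s.fixed.length := by
  refine (card_le_card fun v hv => ?_).trans (List.toFinset_card_le s.fixed)
  by_contra hv'
  have : v ∈ s.pending ∩ restricting G s.avail h := by simp_all [pending]
  simp_all [Settled]

lemma Valid.two_mul_le_card_restricting_sdiff {r : ℕ} {p : ℝ} (hs : s.Valid h) (hS : s.Settled G h)
    (hh : 0 < h) (hr : c * Fintype.card V ≤ h * r) (hp : 0 ≤ p)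
    (hR : r + 2 * p * Fintype.card V ≤ #(restricting G s.avail h)) :
    2 * p * (Fintype.card V - #s.sampled : ℕ) ≤
      #((univ \ s.sampled) ∩ restricting G s.avail h) := by
  have hsplit : #((univ \ s.sampled) ∩ restricting G s.avail h) +
      #(s.sampled ∩ restricting G s.avail h) = #(restricting G s.avail h) := by
    rw [← card_union_of_disjoint (disjoint_sdiff_self_left.mono inf_le_left inf_le_left),
      ← union_inter_distrib_right, sdiff_union_of_subset (subset_univ _), univ_inter]
  have hfixed : (#(s.sampled ∩ restricting G s.avail h) : ℝ) ≤ r := by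
    exact_mod_cast hS.card_inter_restricting_le.trans (hs.length_le hh hr)
  have hn : ((Fintype.card V - #s.sampled : ℕ) : ℝ) ≤ Fintype.card V := by
    exact_mod_cast Nat.sub_le _ _
  rw [← hsplit] at hR
  push_cast at hR
  nlinarith

end State

def Follows (g : ℕ → Fin c) (φ : V → Fin c) (l : List V) : Prop :=
  ∀ m (hm : m < l.length), g m = φ l[m]

lemma Follows.of_prefix {g : ℕ → Fin c} {φ : V → Fin c} {l l' : List V} (hl : l <+: l')
    (hg : Follows g φ l') : Follows g φ l :=
  fun m hm => (hg m (hm.trans_le hl.length_le)).trans (by rw [hl.getElem hm])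

lemma follows_getD (φ : V → Fin c) (l : List V) (x : Fin c) :
    Follows (fun m => (l.map φ).getD m x) φ l :=
  fun m hm => by simp [hm]

variable [Fintype V] (G : SimpleGraph V) (h : ℕ) (g : ℕ → Fin c)

/-- The `m`-th vertex ever fixed gets colour `g m`; the result is `none` when that colour is no
longer available to it. -/
def cascade (s : State V c) : Option (State V c) :=
  if hs : (s.pending ∩ restricting G s.avail h).Nonempty then
    if g s.fixed.length ∈ s.avail hs.choose then
      cascade (s.fix G hs.choose (g s.fixed.length))
    else none
  else some s
termination_by #s.pending
decreasing_by exact State.card_pending_fix_lt (mem_inter.1 hs.choose_spec).1 _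

def step (s : State V c) (v : V) : Option (State V c) :=
  if v ∈ s.sampled then none else cascade G h g (s.addSample v)

def run : State V c → List V → Option (State V c)
  | s, [] => some s
  | s, v :: L => (step G h g s v).bind fun s' => run s' L

def survivors (s : State V c) (t : ℕ) : Finset (Fin t → V) :=
  {f | (run G h g s (List.ofFn f)).isSome}

variable {G h g}

theorem cascade_invariant {P : State V c → Prop}
    (hP : ∀ s u j, u ∈ s.pending → u ∈ restricting G s.avail h → j ∈ s.avail u → P s →
      P (s.fix G u j))
    {s s' : State V c} (hs : P s) (hcas : cascade G h g s = some s') :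
    P s' ∧ s'.Settled G h := by
  rw [cascade] at hcas
  split_ifs at hcas with hne hj
  · have hu := mem_inter.1 hne.choose_spec
    exact cascade_invariant hP (hP _ _ _ hu.1 hu.2 hj hs) hcas
  · cases hcas
    exact ⟨hs, not_nonempty_iff_eq_empty.1 hne⟩
termination_by #s.pending
decreasing_by exact State.card_pending_fix_lt (mem_inter.1 hne.choose_spec).1 _

lemma fixed_prefix_of_cascade_eq_some {s s' : State V c} (hcas : cascade G h g s = some s') :
    s.fixed <+: s'.fixed :=
  (cascade_invariant (P := fun t => s.fixed <+: t.fixed)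
    (fun _ _ _ _ _ _ hp => hp.trans (List.prefix_append _ _)) (List.prefix_refl _) hcas).1

lemma length_lt_of_cascade_eq_some {s s' : State V c}
    (hne : (s.pending ∩ restricting G s.avail h).Nonempty) (hcas : cascade G h g s = some s') :
    s.fixed.length < s'.fixed.length := by
  rw [cascade, dif_pos hne] at hcas
  split_ifs at hcas
  have := (fixed_prefix_of_cascade_eq_some hcas).length_le
  simp only [State.fix, List.length_append, List.length_singleton] at this
  omega

lemma step_eq_some {s s' : State V c} {v : V} (hstep : step G h g s v = some s') :
    v ∉ s.sampled ∧ cascade G h g (s.addSample v) = some s' := by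
  unfold step at hstep
  split_ifs at hstep with hv
  exact ⟨hv, hstep⟩

lemma valid_of_cascade_eq_some {s s' : State V c} (hcas : cascade G h g s = some s')
    (hs : s.Valid h) : s'.Valid h ∧ s'.Settled G h :=
  cascade_invariant (P := (·.Valid h)) (fun _ _ _ hu hR hj ht => ht.fix hu hR hj) hs hcas

lemma run_valid {s s' : State V c} {L : List V} (hrun : run G h g s L = some s')
    (hs : s.Valid h) : s'.Valid h := by
  induction L generalizing s with
  | nil => cases hrun; exact hs
  | cons v L ih =>
    obtain ⟨t, hstep, hrun⟩ := Option.bind_eq_some_iff.1 hrun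
    exact ih hrun (valid_of_cascade_eq_some (step_eq_some hstep).2 (hs.addSample v)).1

/-- Stepping onto a restricting vertex fixes at least one new vertex. -/
lemma step_spec {s s' : State V c} {v : V} (hs : s.Valid h) (hstep : step G h g s v = some s') :
    s'.Valid h ∧ s'.Settled G h ∧ #s'.sampled = #s.sampled + 1 ∧
      (if v ∈ restricting G s.avail h then 2 else 1) * 2 ^ s.fixed.length ≤
        2 ^ s'.fixed.length := by
  obtain ⟨hv, hcas⟩ := step_eq_some hstep
  have hsampled : s'.sampled = insert v s.sampled :=
    (cascade_invariant (P := fun t => t.sampled = insert v s.sampled)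
      (fun _ _ _ _ _ _ hp => hp) rfl hcas).1
  refine ⟨(valid_of_cascade_eq_some hcas (hs.addSample v)).1,
    (valid_of_cascade_eq_some hcas (hs.addSample v)).2,
    by rw [hsampled, card_insert_of_notMem hv], ?_⟩
  split_ifs with hR
  · have hpend : v ∈ (s.addSample v).pending ∩ restricting G s.avail h := by
      rw [mem_inter, State.pending, mem_filter]
      exact ⟨⟨mem_insert_self _ _, fun hfix => hv (hs.1 v hfix)⟩, hR⟩
    rw [← pow_succ']
    exact pow_le_pow_right₀ one_le_two
      (length_lt_of_cascade_eq_some (s := s.addSample v) ⟨v, hpend⟩ hcas)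
  · rw [one_mul]
    exact pow_le_pow_right₀ one_le_two (fixed_prefix_of_cascade_eq_some hcas).length_le

lemma card_survivors_succ (s : State V c) (t : ℕ) :
    #(survivors G h g s (t + 1)) =
      ∑ v, (step G h g s v).elim 0 fun s' => #(survivors G h g s' t) := by
  rw [survivors, card_filter, ← (Fin.consEquiv fun _ => V).sum_comp, Fintype.sum_prod_type]
  refine sum_congr rfl fun v _ => ?_
  cases hstep : step G h g s v <;> simp [run, hstep, survivors]

lemma weight_mul_card_survivors_step_le {s : State V c} (hs : s.Valid h) {t : ℕ} {B : ℝ}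
    (hB : 0 ≤ B) (hnext : ∀ s' : State V c, s'.Valid h → s'.Settled G h →
      #s'.sampled = #s.sampled + 1 → 2 ^ s'.fixed.length * (#(survivors G h g s' t) : ℝ) ≤ B)
    (v : V) :
    (if v ∈ restricting G s.avail h then 2 else 1) *
      (2 ^ s.fixed.length * ((step G h g s v).elim 0 fun s' => #(survivors G h g s' t) : ℕ))
        ≤ B := by
  cases hst : step G h g s v with
  | none => simpa using hB
  | some s' =>
    obtain ⟨hv', hS', hcard, hlen⟩ := step_spec hs hst
    calc _ = ((if v ∈ restricting G s.avail h then 2 else 1) * 2 ^ s.fixed.length : ℝ) *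
          #(survivors G h g s' t) := by simp only [Option.elim_some]; ring
      _ ≤ 2 ^ s'.fixed.length * #(survivors G h g s' t) := by gcongr; exact_mod_cast hlen
      _ ≤ B := hnext s' hv' hS' hcard

/-- The factor `2 ^ s.fixed.length` pays for weighting steps onto restricting vertices by `1/2`:
each such step fixes a new vertex, and at most `r` vertices are ever fixed. -/
theorem two_pow_mul_card_survivors_le {r : ℕ} {p : ℝ} (hh : 0 < h)
    (hr : c * Fintype.card V ≤ h * r) (hp₀ : 0 ≤ p) (hp₁ : p ≤ 1)
    (hR : ∀ σ : V → Finset (Fin c), r + 2 * p * Fintype.card V ≤ #(restricting G σ h)) :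
    ∀ (t : ℕ) (s : State V c), s.Valid h → s.Settled G h →
      2 ^ s.fixed.length * (#(survivors G h g s t) : ℝ) ≤
        2 ^ r * (1 - p) ^ t * (Fintype.card V - #s.sampled).descFactorial t
  | 0, s, hs, _ => by
    have : survivors G h g s 0 = univ := by ext; simp [survivors, run]
    simp only [this, card_univ, Fintype.card_unique, Nat.cast_one, mul_one, pow_zero,
      Nat.descFactorial_zero]
    exact pow_le_pow_right₀ one_le_two (hs.length_le hh hr)
  | t + 1, s, hs, hS => by
    set a := Fintype.card V - #s.sampled
    set B : ℝ := 2 ^ r * (1 - p) ^ t * (a - 1).descFactorial t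
    have hB : 0 ≤ B := by
      have : 0 ≤ 1 - p := by linarith
      positivity
    have hstep := weight_mul_card_survivors_step_le (g := g) hs hB fun s' hs' hS' hcard => by
      have := two_pow_mul_card_survivors_le hh hr hp₀ hp₁ hR t s' hs' hS'
      rwa [hcard, Nat.sub_add_eq] at this
    have hRA := hs.two_mul_le_card_restricting_sdiff hS hh hr hp₀ (hR s.avail)
    rw [card_survivors_succ, Nat.cast_sum, mul_sum,
      ← sum_subset (subset_univ (univ \ s.sampled)) fun v _ hv => by
        simp [step, show v ∈ s.sampled by simpa using hv]]
    calc _ ≤ B * (#(univ \ s.sampled) - #((univ \ s.sampled) ∩ restricting G s.avail h) / 2) :=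
          sum_le_of_two_mul_le fun v _ => hstep v
      _ ≤ B * ((1 - p) * a) := by
          rw [card_sdiff_of_subset (subset_univ _), card_univ]; gcongr; linarith
      _ = 2 ^ r * (1 - p) ^ (t + 1) * a.descFactorial (t + 1) := by
          rcases a with _ | a
          · simp
          · rw [Nat.succ_descFactorial_succ]; push_cast; simp only [B, Nat.add_sub_cancel]; ring

variable {φ : V → Fin c} {S : Finset V}

theorem exists_cascade_eq_some (hφ : ∀ u ∈ S, ∀ w ∈ S, G.Adj u w → φ u ≠ φ w)
    (s : State V c) (hs : s.Honest φ S) :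
    ∃ s', s'.Honest φ S ∧ s'.sampled = s.sampled ∧ s.fixed <+: s'.fixed ∧
      ∀ g, Follows g φ s'.fixed → cascade G h g s = some s' := by
  by_cases hne : (s.pending ∩ restricting G s.avail h).Nonempty
  · set u := hne.choose
    have hu : u ∈ s.sampled := (mem_filter.1 (mem_inter.1 hne.choose_spec).1).1
    obtain ⟨s', hs', hsamp, hpre, hcas⟩ :=
      exists_cascade_eq_some hφ (s.fix G u (φ u)) (hs.fix hφ hu)
    refine ⟨s', hs', hsamp, (List.prefix_append _ _).trans hpre, fun g hg => ?_⟩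
    have hgu : g s.fixed.length = φ u := by
      simpa [State.fix] using hg.of_prefix hpre s.fixed.length (by simp [State.fix])
    rw [cascade, dif_pos hne, hgu, if_pos (hs.2 _ (hs.1 hu))]
    exact hcas g hg
  · exact ⟨s, hs, rfl, List.prefix_refl _, fun g _ => by rw [cascade, dif_neg hne]⟩
termination_by #s.pending
decreasing_by exact State.card_pending_fix_lt (mem_inter.1 hne.choose_spec).1 _

theorem exists_run_eq_some (hφ : ∀ u ∈ S, ∀ w ∈ S, G.Adj u w → φ u ≠ φ w) :
    ∀ (L : List V) (s : State V c), s.Honest φ S → L.Nodup → (∀ v ∈ L, v ∈ S ∧ v ∉ s.sampled) →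
      ∃ s', s.fixed <+: s'.fixed ∧ ∀ g, Follows g φ s'.fixed → run G h g s L = some s'
  | [], s, _, _, _ => ⟨s, List.prefix_refl _, fun _ _ => rfl⟩
  | v :: L, s, hs, hnd, hL => by
    obtain ⟨hvS, hvs⟩ := hL v List.mem_cons_self
    obtain ⟨t, ht, htsamp, hpre, hcas⟩ := exists_cascade_eq_some hφ _ (hs.addSample hvS)
    obtain ⟨s', hpre', hrun⟩ := exists_run_eq_some hφ L t ht (List.nodup_cons.1 hnd).2
      fun w hw => ⟨(hL w (List.mem_cons_of_mem v hw)).1, by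
        rw [htsamp, State.addSample, mem_insert, not_or]
        exact ⟨fun hwv => (List.nodup_cons.1 hnd).1 (hwv ▸ hw),
          (hL w (List.mem_cons_of_mem v hw)).2⟩⟩
    refine ⟨s', hpre.trans hpre', fun g hg => ?_⟩
    rw [run, step, if_neg hvs, hcas g (hg.of_prefix hpre'), Option.bind_some]
    exact hrun g hg

theorem exists_mem_survivors_of_colorable [NeZero c] {r k : ℕ} (hh : 0 < h)
    (hr : c * Fintype.card V ≤ h * r) {π : Finset V} (hπ : (G.induce (π : Set V)).Colorable c)
    {f : Fin k → V} (hf : Function.Injective f) (hfπ : ∀ i, f i ∈ π) :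
    ∃ j : Fin r → Fin c, f ∈ survivors G h (Function.extend Fin.val j 0) State.init k := by
  obtain ⟨D⟩ := hπ
  set φ : V → Fin c := fun v => if hv : v ∈ π then D ⟨v, hv⟩ else 0
  have hφ : ∀ u ∈ π, ∀ w ∈ π, G.Adj u w → φ u ≠ φ w := fun u hu w hw hadj => by
    simpa [φ, hu, hw] using
      D.valid (show (G.induce (π : Set V)).Adj ⟨u, hu⟩ ⟨w, hw⟩ from hadj)
  obtain ⟨s', -, hrun⟩ := exists_run_eq_some (h := h) hφ (List.ofFn f) State.init
    State.honest_init (List.nodup_ofFn.2 hf)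
    fun v hv => ⟨by obtain ⟨i, rfl⟩ := List.mem_ofFn.1 hv; exact hfπ i, notMem_empty v⟩
  have hlen : s'.fixed.length ≤ r :=
    (run_valid (hrun _ (follows_getD φ s'.fixed 0)) State.valid_init).length_le hh hr
  set j : Fin r → Fin c := fun i => (s'.fixed.map φ).getD i 0
  have hj : Follows (Function.extend Fin.val j 0) φ s'.fixed := fun m hm =>
    (Fin.val_injective.extend_apply j 0 ⟨m, hm.trans_le hlen⟩).trans
      (follows_getD φ s'.fixed 0 m hm)
  exact ⟨j, mem_filter.2 ⟨mem_univ _, by rw [hrun _ hj]; rfl⟩⟩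

theorem card_colorable_le [NeZero c] {r : ℕ} {p : ℝ} (hh : 0 < h)
    (hr : c * Fintype.card V ≤ h * r) (hp₀ : 0 ≤ p) (hp₁ : p ≤ 1)
    (hR : ∀ σ : V → Finset (Fin c), r + 2 * p * Fintype.card V ≤ #(restricting G σ h)) (k : ℕ) :
    (#(((univ : Finset V).powersetCard k).filter
        (fun π : Finset V => (G.induce (π : Set V)).Colorable c)) : ℝ) ≤
      (2 * c) ^ r * (1 - p) ^ k * #((univ : Finset V).powersetCard k) := by
  set T := univ.biUnion fun j : Fin r → Fin c =>
    survivors G h (Function.extend Fin.val j 0) State.init k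
  have hT := card_filter_powersetCard_mul_factorial_le (T := T)
    fun π _ hπ f hf hfπ => mem_biUnion.2 <| by
      obtain ⟨j, hj⟩ := exists_mem_survivors_of_colorable hh hr hπ hf hfπ
      exact ⟨j, mem_univ _, hj⟩
  have hsurv (j : Fin r → Fin c) :
      (#(survivors G h (Function.extend Fin.val j 0) State.init k) : ℝ) ≤
        2 ^ r * (1 - p) ^ k * (Fintype.card V).descFactorial k := by
    simpa [State.init] using two_pow_mul_card_survivors_le hh hr hp₀ hp₁ hR k State.init
      State.valid_init State.settled_init
  refine le_of_mul_le_mul_right ?_ (Nat.cast_pos.2 k.factorial_pos)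
  calc _ ≤ (#T : ℝ) := by exact_mod_cast hT
    _ ≤ ∑ j : Fin r → Fin c,
          (#(survivors G h (Function.extend Fin.val j 0) State.init k) : ℝ) := by
        exact_mod_cast card_biUnion_le
    _ ≤ ∑ _j : Fin r → Fin c, 2 ^ r * (1 - p) ^ k * ((Fintype.card V).descFactorial k : ℝ) :=
        sum_le_sum fun j _ => hsurv j
    _ = _ := by
        rw [card_powersetCard, card_univ, Nat.descFactorial_eq_factorial_mul_choose]
        simp only [sum_const, card_univ, Fintype.card_fun, Fintype.card_fin, nsmul_eq_mul]
        push_cast; ring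

lemma exists_two_mul_card_monochromatic_le [NeZero c] (σ : V → Finset (Fin c)) :
    ∃ χ : V → Fin c, 2 * #(monochromatic G χ).edgeFinset ≤
      Fintype.card V * (2 * #(restricting G σ h) + h) := by
  set R := restricting G σ h
  have hR (v : V) (hv : v ∉ R) : ∃ j ∈ σ v, colorDegree G σ v j < h := by
    simpa [R, restricting] using hv
  set χ : V → Fin c := fun v => if hv : v ∈ R then 0 else (hR v hv).choose
  have hχ (v : V) (hv : v ∉ R) : χ v ∈ σ v ∧ colorDegree G σ v (χ v) < h := by
    simpa [χ, hv] using (hR v hv).choose_spec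
  have hdeg (v : V) : (monochromatic G χ).degree v ≤
      (if v ∈ R then Fintype.card V else 0) + (#R + h) := by
    by_cases hv : v ∈ R
    · rw [if_pos hv]
      exact ((monochromatic G χ).degree_lt_card_verts v).le.trans (Nat.le_add_right _ _)
    rw [if_neg hv, zero_add, ← SimpleGraph.card_neighborFinset_eq_degree]
    calc _ ≤ #(R ∪ ({w | G.Adj v w ∧ χ v ∈ σ w} : Finset V)) := card_le_card fun w hw => by
          obtain ⟨hadj, hvw⟩ :=
            monochromatic_adj.1 ((monochromatic G χ).mem_neighborFinset v w |>.1 hw)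
          by_cases hwR : w ∈ R
          · exact mem_union_left _ hwR
          · exact mem_union_right _ (mem_filter.2 ⟨mem_univ _, hadj, hvw ▸ (hχ w hwR).1⟩)
      _ ≤ #R + h := (card_union_le _ _).trans (Nat.add_le_add_left (hχ v hv).2.le _)
  refine ⟨χ, ?_⟩
  rw [← SimpleGraph.sum_degrees_eq_twice_card_edges]
  calc _ ≤ ∑ v, ((if v ∈ R then Fintype.card V else 0) + (#R + h)) :=
        sum_le_sum fun v _ => hdeg v
    _ = _ := by
        rw [sum_add_distrib, sum_ite_mem, univ_inter, sum_const, sum_const, card_univ]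
        simp only [smul_eq_mul]; ring

theorem card_restricting_ge [NeZero c] {ε : ℝ}
    (hmono : ∀ χ : V → Fin c, ε * Fintype.card V ^ 2 < #(monochromatic G χ).edgeFinset)
    (hεn : 4 ≤ ε * Fintype.card V) (hh : (h : ℝ) ≤ ε * Fintype.card V / 4 + 1)
    (σ : V → Finset (Fin c)) :
    3 / 4 * (ε * Fintype.card V) ≤ #(restricting G σ h) := by
  obtain ⟨χ, hχ⟩ := exists_two_mul_card_monochromatic_le (G := G) (h := h) σ
  have hn : (0 : ℝ) < Fintype.card V := by
    by_contra! hn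
    rw [le_antisymm hn (Nat.cast_nonneg _), mul_zero] at hεn
    norm_num at hεn
  have hχ' : (2 * #(monochromatic G χ).edgeFinset : ℝ) ≤
      Fintype.card V * (2 * #(restricting G σ h) + h) := by
    exact_mod_cast hχ
  have : 2 * (ε * Fintype.card V) < 2 * #(restricting G σ h) + h := by
    nlinarith [hmono χ]
  linarith

open Real in
lemma two_mul_pow_mul_one_sub_pow_le {c r k : ℕ} {ε : ℝ} (hc : 2 ≤ c) (hε : 0 < ε) (hε1 : ε < 1)
    (hr : r ≤ 5 * c / ε) (hk : 100 * (c * log c) / ε ^ 2 ≤ k) :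
    (2 * c : ℝ) ^ r * (1 - ε / 4) ^ k ≤ 1 / 3 := by
  have hc' : (2 : ℝ) ≤ c := by exact_mod_cast hc
  have hlog : log 2 ≤ log c := log_le_log two_pos hc'
  have hL : 1 ≤ c * log c / ε := by
    rw [le_div_iff₀ hε]
    nlinarith [log_two_gt_d9]
  have hrlog : r * log (2 * c) ≤ 10 * (c * log c / ε) := by
    calc r * log (2 * c) ≤ 5 * c / ε * (2 * log c) := by
          gcongr
          · exact log_nonneg (by linarith)
          · rw [log_mul two_ne_zero (by positivity)]; linarith
      _ = 10 * (c * log c / ε) := by ring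
  have hεk : 25 * (c * log c / ε) ≤ ε / 4 * k := by
    rw [div_le_iff₀ (by positivity)] at hk
    have : 100 * (c * log c / ε) ≤ ε * k := by
      rw [mul_div_assoc', div_le_iff₀ hε]; nlinarith
    linarith
  calc (2 * c : ℝ) ^ r * (1 - ε / 4) ^ k ≤ exp (r * log (2 * c)) * exp (-(ε / 4)) ^ k := by
        rw [← log_pow, exp_log (by positivity)]
        gcongr
        · linarith
        · linarith [add_one_le_exp (-(ε / 4))]
    _ = exp (r * log (2 * c) - ε / 4 * k) := by rw [← exp_nat_mul, ← exp_add]; ring_nf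
    _ ≤ exp (-2) := exp_le_exp.2 (by linarith)
    _ ≤ 1 / 3 := by
        rw [exp_neg, one_div]
        gcongr
        linarith [add_one_le_exp 2]

theorem three_mul_card_colorable_le {c : ℕ} (hc : 2 ≤ c) {ε : ℝ} (hε : 0 < ε) (hε1 : ε < 1)
    {k : ℕ} (hk : 100 * (c * Real.log c) / ε ^ 2 ≤ k) (hkn : k ≤ Fintype.card V)
    (hmono : ∀ χ : V → Fin c, ε * Fintype.card V ^ 2 < #(monochromatic G χ).edgeFinset) :
    3 * (#(((univ : Finset V).powersetCard k).filter
        (fun π : Finset V => (G.induce (π : Set V)).Colorable c)) : ℝ) ≤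
      #((univ : Finset V).powersetCard k) := by
  have : NeZero c := ⟨by omega⟩
  set n := Fintype.card V
  have hc' : (2 : ℝ) ≤ c := by exact_mod_cast hc
  have hcε : 2 ≤ c / ε := by rw [le_div_iff₀ hε]; nlinarith
  have hεn : 69 * (c / ε) ≤ ε * n := by
    have hkn' : (k : ℝ) ≤ n := by exact_mod_cast hkn
    rw [div_le_iff₀ (by positivity)] at hk
    have hlog : 0.69 ≤ Real.log c :=
      (Real.log_two_gt_d9.le.trans' (by norm_num)).trans (Real.log_le_log two_pos hc')
    rw [mul_div_assoc', div_le_iff₀ hε]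
    nlinarith [mul_le_mul_of_nonneg_left hlog (by positivity : (0 : ℝ) ≤ c)]
  set h := ⌈ε * n / 4⌉₊
  set r := ⌈4 * c / ε⌉₊
  have hh : 0 < h := Nat.ceil_pos.2 (by linarith)
  have hhr : c * n ≤ h * r := by
    have : (c * n : ℝ) ≤ h * r := calc
      (c * n : ℝ) = ε * n / 4 * (4 * c / ε) := by field_simp
      _ ≤ h * r := by gcongr <;> exact Nat.le_ceil _
    exact_mod_cast this
  have hr : (r : ℝ) ≤ 5 * c / ε := by
    have := Nat.ceil_lt_add_one (by positivity : 0 ≤ 4 * c / ε)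
    have e4 : 4 * (c : ℝ) / ε = 4 * (c / ε) := mul_div_assoc _ _ _
    have e5 : 5 * (c : ℝ) / ε = 5 * (c / ε) := mul_div_assoc _ _ _
    linarith
  have hR (σ : V → Finset (Fin c)) : r + 2 * (ε / 4) * n ≤ #(restricting G σ h) := by
    have := card_restricting_ge hmono (by linarith) (Nat.ceil_lt_add_one (by positivity)).le σ
    rw [mul_div_assoc] at hr
    linarith
  have hcol := card_colorable_le hh hhr (by positivity) (by linarith) hR k
  have := mul_le_mul_of_nonneg_right (two_mul_pow_mul_one_sub_pow_le hc hε hε1 hr hk)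
    (Nat.cast_nonneg (#((univ : Finset V).powersetCard k)))
  linarith

end AlonKrivelevich

end

open AlonKrivelevich in
/-- Alon–Krivelevich: `c`-colorability is `(ε, O((c·ln c)/ε²))`-reducible to
`c`-colorability. There is an absolute constant `C > 0` such that with
`k = ⌈C·(c·ln c)/ε²⌉`, for every simple graph `G` on `n ≥ k` vertices:
(1) if `G` is `c`-colorable then every induced subgraph on `k` vertices is
`c`-colorable, and (2) if `G` is `ε`-far from `c`-colorability (every graph
differing from `G` in at most `ε·n²` edges is not `c`-colorable), then a uniformly
random induced subgraph on `k` vertices is not `c`-colorable with probability at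
least `2/3`. -/
theorem colorability_reducible :
    ∃ C : ℝ, 0 < C ∧
      ∀ (c : ℕ), 2 ≤ c → ∀ ε : ℝ, 0 < ε → ε < 1 →
      ∀ k : ℕ, k = ⌈C * ((c : ℝ) * Real.log c) / ε ^ 2⌉₊ →
      ∀ (V : Type) [Fintype V] [DecidableEq V], ∀ (G : SimpleGraph V),
      ∀ n : ℕ, n = Fintype.card V → k ≤ n →
      ((G.Colorable c →
          ∀ π ∈ (Finset.univ : Finset V).powersetCard k,
            (G.induce (↑π : Set V)).Colorable c) ∧
       ((∀ G' : SimpleGraph V,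
            ((symmDiff G.edgeSet G'.edgeSet).ncard : ℝ) ≤ ε * (n : ℝ) ^ 2 →
            ¬ G'.Colorable c) →
          ((((Finset.univ : Finset V).powersetCard k).filter
              (fun π : Finset V => ¬ (G.induce (↑π : Set V)).Colorable c)).card : ℝ)
            ≥ 2 / 3 * (((Finset.univ : Finset V).powersetCard k).card : ℝ))) := by
  refine ⟨100, by norm_num, fun c hc ε hε hε1 k hk V _ _ G n hn hkn => ⟨?_, fun hfar => ?_⟩⟩
  · exact fun hG π _ => hG.of_hom (SimpleGraph.Embedding.induce _).toHom
  subst hn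
  have hcol := three_mul_card_colorable_le hc hε hε1 (hk ▸ Nat.le_ceil _) hkn
    (lt_card_monochromatic_of_far hfar)
  have hsplit : (_ : ℝ) = _ := congrArg Nat.cast <| card_filter_add_card_filter_not
    (s := (univ : Finset V).powersetCard k) fun π : Finset V => (G.induce (π : Set V)).Colorable c
  push_cast at hsplit
  linarith
end

section
/- Let (S, I, O, δ, λ) be a deterministic Mealy machine with finite state set S of cardinality n, transition function δ : S × I → S and output function λ : S × I → O, and let δ* : S × I* → S and λ* : S × I* → O* be their canonical extensions to input words. Suppose the machine is reduced: for every pair of distinct states s ≠ s' there exists a word w ∈ I* with λ*(s, w) ≠ λ*(s', w). Then there exists a homing sequence of length at most (n−1)², i.e. a word σ ∈ I* with |σ| ≤ (n−1)² such that for all states s, s', if λ*(s, σ) = λ*(s', σ) then δ*(s, σ) = δ*(s', σ). -/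
/-- Canonical extension of the transition function of a Mealy machine to input words:
`mealyDelta δ s w` is the state reached after reading the word `w` from state `s`. -/
def mealyDelta {S I : Type*} (δ : S → I → S) : S → List I → S
  | s, [] => s
  | s, a :: w => mealyDelta δ (δ s a) w

/-- Canonical extension of the output function of a Mealy machine to input words:
`mealyLambda δ lam s w` is the output word produced while reading the word `w` from
state `s`. -/
def mealyLambda {S I O : Type*} (δ : S → I → S) (lam : S → I → O) :
    S → List I → List O
  | _, [] => []
  | s, a :: w => lam s a :: mealyLambda δ lam (δ s a) w

/-!
Moore's argument: the partitions of the states by agreement of the outputs on all words of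
length `≤ k` refine as `k` grows, and once two consecutive ones coincide they stay fixed; so
in a reduced machine distinct states are separated by a word of length `≤ n - 1`.
If `σ` is not homing, two states with equal outputs on `σ` reach distinct states, and
appending a word of length `≤ n - 1` separating those splits the class of that output word.
The number of distinct output words can grow only `n - 1` times, and once it equals `n` the
output determines the initial state, hence the final one.
-/

open Finset

theorem Finset.card_image_comp_lt {α β γ : Type*} [DecidableEq β] [DecidableEq γ]
    {s : Finset α} {g : α → β} {h : β → γ} {x y : α} (hx : x ∈ s) (hy : y ∈ s)
    (hne : g x ≠ g y) (heq : h (g x) = h (g y)) : #(s.image (h ∘ g)) < #(s.image g) := by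
  rw [← image_image]
  refine card_image_le.lt_of_ne fun hcard => hne ?_
  exact card_image_iff.mp hcard (mem_image_of_mem g hx) (mem_image_of_mem g hy) heq

theorem Nat.exists_lt_apply_succ_le {f : ℕ → ℕ} {n : ℕ} (h0 : 1 ≤ f 0) (hn : f n ≤ n) :
    ∃ k < n, f (k + 1) ≤ f k := by
  by_contra! hlt
  have hgrow : ∀ k ≤ n, k + 1 ≤ f k := by
    intro k
    induction k with
    | zero => exact fun _ => h0
    | succ k ih =>
      intro hk
      have := hlt k (by omega)
      have := ih (by omega)
      omega
  have := hgrow n le_rfl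
  omega

section Mealy

variable {S I O : Type*} (δ : S → I → S) (lam : S → I → O)

theorem mealyDelta_append (s : S) (u v : List I) :
    mealyDelta δ s (u ++ v) = mealyDelta δ (mealyDelta δ s u) v := by
  induction u generalizing s with
  | nil => rfl
  | cons a u ih => exact ih (δ s a)

theorem mealyLambda_append (s : S) (u v : List I) :
    mealyLambda δ lam s (u ++ v) =
      mealyLambda δ lam s u ++ mealyLambda δ lam (mealyDelta δ s u) v := by
  induction u generalizing s with
  | nil => rfl
  | cons a u ih => simp only [List.cons_append, mealyLambda, mealyDelta, ih]

theorem length_mealyLambda (s : S) (u : List I) :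
    (mealyLambda δ lam s u).length = u.length := by
  induction u generalizing s with
  | nil => rfl
  | cons a u ih => simp only [mealyLambda, List.length_cons, ih]

theorem take_mealyLambda_append (s : S) (u v : List I) :
    (mealyLambda δ lam s (u ++ v)).take u.length = mealyLambda δ lam s u := by
  rw [mealyLambda_append]
  exact List.take_left' (length_mealyLambda δ lam s u)

/-- Two states have equal `outputUpTo k` iff they agree on all words of length `≤ k`. -/
def outputUpTo (k : ℕ) (s : S) : List I → List O :=
  fun w => mealyLambda δ lam s (w.take k)

theorem outputUpTo_eq_comp {k m : ℕ} (hkm : k ≤ m) (s : S) :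
    outputUpTo δ lam k s = outputUpTo δ lam m s ∘ List.take k := by
  funext w
  simp only [outputUpTo, Function.comp_apply, List.take_take, min_eq_right hkm]

theorem outputUpTo_eq_of_le {k m : ℕ} (hkm : k ≤ m) {s s' : S}
    (h : outputUpTo δ lam m s = outputUpTo δ lam m s') :
    outputUpTo δ lam k s = outputUpTo δ lam k s' := by
  rw [outputUpTo_eq_comp δ lam hkm s, outputUpTo_eq_comp δ lam hkm s', h]

theorem outputUpTo_succ_eq_iff {k : ℕ} {s s' : S} :
    outputUpTo δ lam (k + 1) s = outputUpTo δ lam (k + 1) s' ↔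
      ∀ a, lam s a = lam s' a ∧ outputUpTo δ lam k (δ s a) = outputUpTo δ lam k (δ s' a) := by
  constructor
  · intro h a
    have hw : ∀ w, lam s a = lam s' a ∧
        outputUpTo δ lam k (δ s a) w = outputUpTo δ lam k (δ s' a) w := fun w => by
      simpa [outputUpTo, mealyLambda] using congrFun h (a :: w)
    exact ⟨(hw []).1, funext fun w => (hw w).2⟩
  · intro h
    funext w
    rcases w with _ | ⟨a, w⟩
    · rfl
    · simp only [outputUpTo, List.take_succ_cons, mealyLambda, (h a).1]
      exact congrArg _ (congrFun (h a).2 w)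

/-- Agreement up to depth `k` equals agreement up to depth `k + 1` (the converse implication
always holds). -/
def OutputStableAt (k : ℕ) : Prop :=
  ∀ s s' : S, outputUpTo δ lam k s = outputUpTo δ lam k s' →
    outputUpTo δ lam (k + 1) s = outputUpTo δ lam (k + 1) s'

theorem OutputStableAt.succ {k : ℕ} (hk : OutputStableAt δ lam k) :
    OutputStableAt δ lam (k + 1) := by
  intro s s' h
  rw [outputUpTo_succ_eq_iff] at h ⊢
  exact fun a => ⟨(h a).1, hk _ _ (h a).2⟩

theorem OutputStableAt.mono {k m : ℕ} (hk : OutputStableAt δ lam k) (hkm : k ≤ m) :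
    OutputStableAt δ lam m := by
  induction m, hkm using Nat.le_induction with
  | base => exact hk
  | succ m _ ih => exact OutputStableAt.succ δ lam ih

theorem OutputStableAt.outputUpTo_eq {k : ℕ} (hk : OutputStableAt δ lam k) {m : ℕ}
    (hkm : k ≤ m) {s s' : S} (h : outputUpTo δ lam k s = outputUpTo δ lam k s') :
    outputUpTo δ lam m s = outputUpTo δ lam m s' := by
  induction m, hkm using Nat.le_induction with
  | base => exact h
  | succ m hkm ih => exact OutputStableAt.mono δ lam hk hkm _ _ ih

theorem exists_outputStableAt_lt_card [Fintype S] [Nonempty S] :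
    ∃ k < Fintype.card S, OutputStableAt δ lam k := by
  classical
  obtain ⟨k, hk, hcard⟩ := Nat.exists_lt_apply_succ_le
    (f := fun k => #(univ.image (outputUpTo δ lam k)))
    (card_pos.mpr (univ_nonempty.image _)) card_image_le
  refine ⟨k, hk, fun s s' hs => ?_⟩
  by_contra hs'
  have hcomp : outputUpTo δ lam k = (· ∘ List.take k) ∘ outputUpTo δ lam (k + 1) :=
    funext fun t => outputUpTo_eq_comp δ lam k.le_succ t
  have hlt := card_image_comp_lt (h := (· ∘ List.take k)) (mem_univ s) (mem_univ s') hs'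
    ((congrFun hcomp s).symm.trans (hs.trans (congrFun hcomp s')))
  rw [← hcomp] at hlt
  exact hlt.not_ge hcard

theorem exists_distinguishing_word_length_le [Fintype S]
    (hreduced : ∀ s s' : S, s ≠ s' →
      ∃ w : List I, mealyLambda δ lam s w ≠ mealyLambda δ lam s' w)
    {s s' : S} (hne : s ≠ s') :
    ∃ w : List I, w.length ≤ Fintype.card S - 1 ∧
      mealyLambda δ lam s w ≠ mealyLambda δ lam s' w := by
  have : Nonempty S := ⟨s⟩
  obtain ⟨k, hk, hstab⟩ := exists_outputStableAt_lt_card δ lam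
  obtain ⟨w, hw⟩ := hreduced s s' hne
  have hsep : outputUpTo δ lam (Fintype.card S - 1) s ≠
      outputUpTo δ lam (Fintype.card S - 1) s' := by
    intro h
    have hall := OutputStableAt.outputUpTo_eq δ lam hstab (m := k + w.length) (by omega)
      (outputUpTo_eq_of_le δ lam (by omega) h)
    have := congrFun hall w
    simp only [outputUpTo, List.take_of_length_le (by omega : w.length ≤ k + w.length)] at this
    exact hw this
  obtain ⟨v, hv⟩ := Function.ne_iff.mp hsep
  exact ⟨v.take (Fintype.card S - 1), List.length_take_le _ _, hv⟩

def IsHomingSequence (σ : List I) : Prop :=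
  ∀ s s' : S, mealyLambda δ lam s σ = mealyLambda δ lam s' σ →
    mealyDelta δ s σ = mealyDelta δ s' σ

variable [Fintype S] [DecidableEq O]

def outputCount (σ : List I) : ℕ :=
  #(univ.image fun s => mealyLambda δ lam s σ)

theorem isHomingSequence_of_card_le_outputCount {σ : List I}
    (h : Fintype.card S ≤ outputCount δ lam σ) : IsHomingSequence δ lam σ := by
  intro s s' hout
  have hinj := card_image_iff.mp (card_image_le.antisymm h)
  rw [hinj (mem_coe.mpr (mem_univ s)) (mem_coe.mpr (mem_univ s')) hout]

theorem exists_outputCount_lt_append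
    (hreduced : ∀ s s' : S, s ≠ s' →
      ∃ w : List I, mealyLambda δ lam s w ≠ mealyLambda δ lam s' w)
    {σ : List I} (hσ : ¬IsHomingSequence δ lam σ) :
    ∃ w : List I, w.length ≤ Fintype.card S - 1 ∧
      outputCount δ lam σ < outputCount δ lam (σ ++ w) := by
  obtain ⟨s, s', hout, hne⟩ : ∃ s s' : S, mealyLambda δ lam s σ = mealyLambda δ lam s' σ ∧
      mealyDelta δ s σ ≠ mealyDelta δ s' σ := by
    simpa [IsHomingSequence] using hσ
  obtain ⟨w, hw, hsep⟩ := exists_distinguishing_word_length_le δ lam hreduced hne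
  refine ⟨w, hw, ?_⟩
  have hcomp : (fun t => mealyLambda δ lam t σ) =
      List.take σ.length ∘ fun t => mealyLambda δ lam t (σ ++ w) :=
    funext fun t => (take_mealyLambda_append δ lam t σ w).symm
  rw [outputCount, hcomp]
  refine card_image_comp_lt (mem_univ s) (mem_univ s') ?_ ?_
  · rw [mealyLambda_append, mealyLambda_append, hout]
    exact fun h => hsep (List.append_cancel_left h)
  · simpa only [take_mealyLambda_append] using hout

theorem exists_isHomingSequence_append
    (hreduced : ∀ s s' : S, s ≠ s' →
      ∃ w : List I, mealyLambda δ lam s w ≠ mealyLambda δ lam s' w)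
    (k : ℕ) (σ : List I) (hσ : Fintype.card S - outputCount δ lam σ ≤ k) :
    ∃ τ : List I, τ.length ≤ k * (Fintype.card S - 1) ∧ IsHomingSequence δ lam (σ ++ τ) := by
  induction k generalizing σ with
  | zero =>
    exact ⟨[], Nat.zero_le _, by simpa using isHomingSequence_of_card_le_outputCount δ lam (by omega)⟩
  | succ k ih =>
    by_cases hhom : IsHomingSequence δ lam σ
    · exact ⟨[], Nat.zero_le _, by simpa using hhom⟩
    obtain ⟨w, hw, hlt⟩ := exists_outputCount_lt_append δ lam hreduced hhom
    obtain ⟨τ, hτ, hhom'⟩ := ih (σ ++ w) (by omega)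
    refine ⟨w ++ τ, ?_, by simpa using hhom'⟩
    rw [List.length_append, Nat.succ_mul]
    omega

end Mealy

/-- Every reduced deterministic Mealy machine with `n` states has a homing sequence of
length at most `(n−1)²`: an input word `σ` such that whenever two states produce the
same output word on `σ`, they reach the same state after reading `σ`. -/
theorem exists_homing_sequence {S I O : Type*} [Fintype S]
    (n : ℕ) (hn : n = Fintype.card S)
    (δ : S → I → S) (lam : S → I → O)
    (hreduced : ∀ s s' : S, s ≠ s' →
      ∃ w : List I, mealyLambda δ lam s w ≠ mealyLambda δ lam s' w) :
    ∃ σ : List I, σ.length ≤ (n - 1) ^ 2 ∧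
      ∀ s s' : S, mealyLambda δ lam s σ = mealyLambda δ lam s' σ →
        mealyDelta δ s σ = mealyDelta δ s' σ := by
  classical
  subst hn
  have hstart : Fintype.card S - outputCount δ lam [] ≤ Fintype.card S - 1 := by
    rcases isEmpty_or_nonempty S with hS | hS
    · simp [Fintype.card_eq_zero]
    · have : 0 < outputCount δ lam [] := card_pos.mpr (univ_nonempty.image _)
      omega
  obtain ⟨σ, hσ, hhom⟩ := exists_isHomingSequence_append δ lam hreduced _ [] hstart
  exact ⟨σ, by simpa [sq] using hσ, hhom⟩
end

section
/- Let (S, I, O, δ, λ) be a deterministic Mealy machine with finite state set S of cardinality n, transition function δ : S × I → S and output function λ : S × I → O, with canonical extensions δ* and λ* to input words. If two states s, s' ∈ S are distinguishable, i.e. there exists some word w ∈ I* with λ*(s, w) ≠ λ*(s', w), then there exists such a distinguishing word of length at most n − 1. -/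
section Aux

variable {S I O : Type*} (δ : S → I → S) (lam : S → I → O)

/-- `k`-step indistinguishability. -/
def Edist (k : ℕ) (s t : S) : Prop :=
  ∀ w : List I, w.length ≤ k → mealyLambda δ lam s w = mealyLambda δ lam t w

lemma Edist_anti {k m : ℕ} (h : k ≤ m) {s t : S} (H : Edist δ lam m s t) :
    Edist δ lam k s t := fun w hw => H w (hw.trans h)

lemma Edist_succ (k : ℕ) (s t : S) :
    Edist δ lam (k + 1) s t ↔
      (∀ a, lam s a = lam t a) ∧ ∀ a, Edist δ lam k (δ s a) (δ t a) := by
  constructor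
  · intro h
    refine ⟨fun a => ?_, fun a w hw => ?_⟩
    · have := h [a] (by simp)
      simpa [mealyLambda] using this
    · have := h (a :: w) (by simpa using hw)
      exact ((by simpa [mealyLambda] using this : lam s a = lam t a ∧ mealyLambda δ lam (δ s a) w = mealyLambda δ lam (δ t a) w)).2
  · rintro ⟨h1, h2⟩ w hw
    cases w with
    | nil => rfl
    | cons a w =>
        simp only [mealyLambda, List.cons.injEq]
        exact ⟨h1 a, h2 a w (by simpa using hw)⟩

lemma Edist_stable {k : ℕ}
    (hk : ∀ s t : S, Edist δ lam k s t ↔ Edist δ lam (k + 1) s t) :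
    ∀ j, ∀ s t : S, Edist δ lam (k + j) s t ↔ Edist δ lam k s t := by
  intro j
  induction j with
  | zero => intro s t; rfl
  | succ j ih =>
      intro s t
      rw [show k + (j + 1) = (k + j) + 1 from rfl, Edist_succ]
      constructor
      · rintro ⟨h1, h2⟩
        exact (hk s t).mpr <| (Edist_succ δ lam k s t).mpr
          ⟨h1, fun a => (ih _ _).mp (h2 a)⟩
      · intro h
        obtain ⟨h1, h2⟩ := (Edist_succ δ lam k s t).mp ((hk s t).mp h)
        exact ⟨h1, fun a => (ih _ _).mpr (h2 a)⟩

/-- The setoid of `k`-step indistinguishability. -/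
def EdistSetoid (k : ℕ) : Setoid S :=
  ⟨Edist δ lam k, fun _ _ _ => rfl,
   fun h w hw => (h w hw).symm,
   fun h h' w hw => (h w hw).trans (h' w hw)⟩

open Classical in
noncomputable def qcard [Fintype S] (k : ℕ) : ℕ :=
  Fintype.card (Quotient (EdistSetoid δ lam k))

open Classical in
lemma qcard_lt [Fintype S] {k : ℕ}
    (h : ¬ ∀ s t : S, Edist δ lam k s t ↔ Edist δ lam (k + 1) s t) :
    qcard δ lam k < qcard δ lam (k + 1) := by
  simp only [not_forall] at h
  obtain ⟨s, t, hst⟩ := h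
  have hEk : Edist δ lam k s t ∧ ¬ Edist δ lam (k + 1) s t := by
    by_cases h1 : Edist δ lam (k + 1) s t
    · exact absurd (iff_of_true (Edist_anti δ lam (Nat.le_succ k) h1) h1) hst
    · by_cases h0 : Edist δ lam k s t
      · exact ⟨h0, h1⟩
      · exact absurd (iff_of_false h0 h1) hst
  let f : Quotient (EdistSetoid δ lam (k + 1)) → Quotient (EdistSetoid δ lam k) :=
    Quotient.lift (Quotient.mk (EdistSetoid δ lam k))
      (fun a b hab => Quotient.sound (Edist_anti δ lam (Nat.le_succ k) hab))
  have hsurj : Function.Surjective f := by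
    intro q
    obtain ⟨a, rfl⟩ := Quotient.exists_rep q
    exact ⟨Quotient.mk _ a, rfl⟩
  have hninj : ¬ Function.Injective f := by
    intro hinj
    have : (Quotient.mk (EdistSetoid δ lam (k + 1)) s) = Quotient.mk _ t :=
      hinj (Quotient.sound hEk.1)
    exact hEk.2 (Quotient.exact this)
  exact Fintype.card_lt_of_surjective_not_injective f hsurj hninj

end Aux

/-- In a deterministic Mealy machine with `n` states, if two states are
distinguishable by the outputs on some input word, then they are distinguishable by
an input word of length at most `n − 1`. -/
theorem exists_short_distinguishing_word {S I O : Type*} [Fintype S]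
    (δ : S → I → S) (lam : S → I → O) (s s' : S)
    (hdist : ∃ w : List I, mealyLambda δ lam s w ≠ mealyLambda δ lam s' w) :
    ∃ w : List I, w.length ≤ Fintype.card S - 1 ∧
      mealyLambda δ lam s w ≠ mealyLambda δ lam s' w := by
  classical
  set n := Fintype.card S with hn
  have hn1 : 1 ≤ n := Fintype.card_pos_iff.mpr ⟨s⟩
  -- there is a stabilization point k ≤ n - 1
  have hstab : ∃ k ≤ n - 1, ∀ a b : S, Edist δ lam k a b ↔ Edist δ lam (k + 1) a b := by
    by_contra h
    simp only [not_exists, not_and] at h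
    have hgrow : ∀ j ≤ n, j + 1 ≤ qcard δ lam (S := S) j := by
      intro j hj
      induction j with
      | zero =>
          exact Fintype.card_pos_iff.mpr ⟨Quotient.mk _ s⟩
      | succ j ih =>
          have hj' : j ≤ n - 1 := by omega
          have := qcard_lt δ lam (h j hj')
          have := ih (by omega)
          omega
    have hle : qcard δ lam (S := S) n ≤ n := by
      unfold qcard
      exact (Fintype.card_quotient_le _).trans_eq hn.symm
    have := hgrow n le_rfl
    omega
  obtain ⟨k, hk, hstable⟩ := hstab
  obtain ⟨w, hw⟩ := hdist
  have hnotE : ¬ Edist δ lam w.length s s' := fun h => hw (h w le_rfl)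
  have hnotE' : ¬ Edist δ lam (n - 1) s s' := by
    by_cases hlen : w.length ≤ n - 1
    · exact fun h => hnotE (Edist_anti δ lam hlen h)
    · intro h
      have h1 : Edist δ lam k s s' :=
        Edist_anti δ lam hk h
      have h2 : Edist δ lam (k + (w.length - k)) s s' :=
        (Edist_stable δ lam hstable (w.length - k) s s').mpr h1
      rw [show k + (w.length - k) = w.length by omega] at h2
      exact hnotE h2
  simp only [Edist, not_forall] at hnotE'
  obtain ⟨w', hw', hne⟩ := hnotE'
  exact ⟨w', hw', hne⟩
end
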